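/- For H ∈ (0,1), (n^(2H+2)/2) ∫₀¹∫₀¹ t^(n−1) u^(n−1) (t^(2H) + u^(2H) − |t−u|^(2H)) du dt = n^(2H+1)/(n+2H) − n^(2H+2) Γ(n) Γ(2H+1) / ((2n+2H) Γ(n+1+2H)). -/

import Mathlib

/-!
The integrand is symmetric in `(t, u)`, so the integral over the square is twice the integral
over the triangle `u ≤ t`, where `|t - u| = t - u`. The kernel `t^p + u^p - |t - u|^p` is
homogeneous of degree `p = 2H`, so the substitution `u = t s` turns the inner integral into
`t^(2n-1+p)` times a constant; that constant is a sum of two power integrals and the Beta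
integral `B(n, p + 1)`.
-/

open Real intervalIntegral MeasureTheory Set

theorem intervalIntegral_square_eq_two_smul_triangle {E : Type*} [NormedAddCommGroup E]
    [NormedSpace ℝ E] {g : ℝ → ℝ → E} {a b : ℝ} (hab : a ≤ b)
    (hg : IntegrableOn (Function.uncurry g) (Ioc a b ×ˢ Ioc a b))
    (hsymm : ∀ t u, g t u = g u t) :
    ∫ t in a..b, ∫ u in a..b, g t u = 2 • ∫ t in a..b, ∫ u in a..t, g t u := by
  set μ := volume.restrict (Ioc a b)
  have hint : Integrable (Function.uncurry g) (μ.prod μ) := by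
    rwa [Measure.prod_restrict, ← Measure.volume_eq_prod]
  set lower := {z : ℝ × ℝ | z.2 ≤ z.1}.indicator (Function.uncurry g)
  set strictLower := {z : ℝ × ℝ | z.2 < z.1}.indicator (Function.uncurry g)
  -- the inequality is strict on the reflected part, so the diagonal is counted once
  have hsplit : ∀ z, Function.uncurry g z = lower z + strictLower z.swap := by
    rintro ⟨t, u⟩
    rcases le_or_gt u t with h | h
    · simp [lower, strictLower, h, h.not_gt]
    · simp [lower, strictLower, h, h.not_ge, hsymm u t]
  have hlower : Integrable lower (μ.prod μ) :=
    hint.indicator (measurableSet_le measurable_snd measurable_fst)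
  have hstrict : Integrable strictLower (μ.prod μ) :=
    hint.indicator (measurableSet_lt measurable_snd measurable_fst)
  have hlower_inner : ∀ t ∈ Ioc a b, ∫ u, lower (t, u) ∂μ = ∫ u in a..t, g t u := by
    intro t ht
    have hind : ∫ u, lower (t, u) ∂μ = ∫ u in Ioc a b, (Iic t).indicator (g t) u := rfl
    rw [hind, setIntegral_indicator measurableSet_Iic, Ioc_inter_Iic, inf_eq_right.2 ht.2,
      integral_of_le ht.1.le]
  have hstrict_inner : ∀ t ∈ Ioc a b, ∫ u, strictLower (t, u) ∂μ = ∫ u in a..t, g t u := by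
    intro t ht
    have hind : ∫ u, strictLower (t, u) ∂μ = ∫ u in Ioc a b, (Iio t).indicator (g t) u := rfl
    have hIoo : Ioc a b ∩ Iio t = Ioo a t :=
      Set.ext fun u => ⟨fun hu => ⟨hu.1.1, hu.2⟩, fun hu => ⟨⟨hu.1, hu.2.le.trans ht.2⟩, hu.2⟩⟩
    rw [hind, setIntegral_indicator measurableSet_Iio, hIoo, integral_of_le ht.1.le,
      integral_Ioc_eq_integral_Ioo]
  simp only [integral_of_le hab]
  calc ∫ t in Ioc a b, ∫ u in Ioc a b, g t u
      = ∫ z, lower z + strictLower z.swap ∂(μ.prod μ) := by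
        simp_rw [← hsplit]; exact (integral_prod _ hint).symm
    _ = ∫ z, lower z ∂(μ.prod μ) + ∫ z, strictLower z ∂(μ.prod μ) :=
        (integral_add hlower hstrict.swap).trans (congrArg _ (integral_prod_swap _))
    _ = _ := by
        rw [two_smul, integral_prod _ hlower, integral_prod _ hstrict,
          setIntegral_congr_fun measurableSet_Ioc hlower_inner,
          setIntegral_congr_fun measurableSet_Ioc hstrict_inner]

theorem integral_rpow_mul_one_sub_rpow {a b : ℝ} (ha : 0 < a) (hb : 0 < b) :
    ∫ x in (0:ℝ)..1, x ^ (a - 1) * (1 - x) ^ (b - 1) = Gamma a * Gamma b / Gamma (a + b) := by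
  apply Complex.ofReal_injective
  push_cast
  rw [← Complex.Gamma_ofReal, ← Complex.Gamma_ofReal, ← Complex.Gamma_ofReal, Complex.ofReal_add,
    ← Complex.betaIntegral_eq_Gamma_mul_div _ _ (by simpa) (by simpa), Complex.betaIntegral,
    ← intervalIntegral.integral_ofReal]
  refine integral_congr fun x hx => ?_
  rw [uIcc_of_le zero_le_one] at hx
  push_cast
  rw [Complex.ofReal_cpow hx.1, Complex.ofReal_cpow (sub_nonneg.2 hx.2)]
  push_cast; rfl

theorem integral_pow_mul_rpow (m : ℕ) {p : ℝ} (hp : 0 < p) :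
    ∫ x in (0:ℝ)..1, x ^ m * x ^ p = 1 / (m + p + 1) := by
  have hmp : (m : ℝ) + p ≠ 0 := by positivity
  have hpow : EqOn (fun x : ℝ => x ^ m * x ^ p) (fun x => x ^ ((m : ℝ) + p)) (uIcc 0 1) := by
    intro x hx
    rw [uIcc_of_le zero_le_one] at hx
    simp only [rpow_add' hx.1 hmp, rpow_natCast]
  rw [integral_congr hpow, integral_rpow (Or.inl (by linarith [m.cast_nonneg (α := ℝ)]))]
  simp [zero_rpow (by positivity : (m : ℝ) + p + 1 ≠ 0)]

/-- Twice the covariance `E[B_t B_u]` of fractional Brownian motion with Hurst index `p / 2`. -/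
noncomputable def fbmCov (p t u : ℝ) : ℝ := t ^ p + u ^ p - |t - u| ^ p

theorem fbmCov_comm (p t u : ℝ) : fbmCov p t u = fbmCov p u t := by
  rw [fbmCov, fbmCov, abs_sub_comm]; ring

theorem fbmCov_mul_mul {p c t u : ℝ} (hc : 0 ≤ c) (ht : 0 ≤ t) (hu : 0 ≤ u) :
    fbmCov p (c * t) (c * u) = c ^ p * fbmCov p t u := by
  rw [fbmCov, fbmCov, ← mul_sub, abs_mul, abs_of_nonneg hc, mul_rpow hc ht, mul_rpow hc hu,
    mul_rpow hc (abs_nonneg _)]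
  ring

theorem continuous_fbmCov {p : ℝ} (hp : 0 ≤ p) : Continuous fun z : ℝ × ℝ => fbmCov p z.1 z.2 := by
  unfold fbmCov; fun_prop (disch := exact hp)

theorem integral_pow_mul_fbmCov_one (m : ℕ) {p : ℝ} (hp : 0 < p) :
    ∫ s in (0:ℝ)..1, s ^ m * fbmCov p 1 s
      = 1 / (m + 1) + 1 / (m + p + 1) - Gamma (m + 1) * Gamma (p + 1) / Gamma (m + p + 2) := by
  have hbeta : ∫ s in (0:ℝ)..1, s ^ m * |1 - s| ^ p
      = Gamma (m + 1) * Gamma (p + 1) / Gamma (m + p + 2) := by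
    rw [show (m : ℝ) + p + 2 = (m + 1) + (p + 1) by ring,
      ← integral_rpow_mul_one_sub_rpow (by positivity) (by positivity)]
    refine integral_congr fun s hs => ?_
    rw [uIcc_of_le zero_le_one] at hs
    simp [abs_of_nonneg (sub_nonneg.2 hs.2)]
  simp only [fbmCov, one_rpow, mul_sub, mul_add, mul_one]
  rw [intervalIntegral.integral_sub, intervalIntegral.integral_add, integral_pow,
    integral_pow_mul_rpow m hp, hbeta]
  · simp
  all_goals exact Continuous.intervalIntegrable (by fun_prop (disch := exact hp.le)) _ _

theorem integral_pow_mul_fbmCov (m : ℕ) (p : ℝ) {t : ℝ} (ht : 0 ≤ t) :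
    ∫ u in (0:ℝ)..t, u ^ m * fbmCov p t u
      = t ^ (m + 1) * t ^ p * ∫ s in (0:ℝ)..1, s ^ m * fbmCov p 1 s := by
  have hscale : ∀ s ∈ uIcc (0:ℝ) 1,
      (t * s) ^ m * fbmCov p t (t * s) = t ^ m * t ^ p * (s ^ m * fbmCov p 1 s) := by
    intro s hs
    rw [uIcc_of_le zero_le_one] at hs
    have hhom := fbmCov_mul_mul (p := p) ht zero_le_one hs.1
    rw [mul_one] at hhom
    rw [hhom, mul_pow]
    ring
  calc ∫ u in (0:ℝ)..t, u ^ m * fbmCov p t u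
      = t * ∫ s in (0:ℝ)..1, (t * s) ^ m * fbmCov p t (t * s) := by
        simpa using (mul_integral_comp_mul_left (f := fun u => u ^ m * fbmCov p t u) (c := t)
          (a := 0) (b := 1)).symm
    _ = _ := by
        rw [integral_congr hscale, intervalIntegral.integral_const_mul]
        ring

theorem integral_integral_pow_mul_fbmCov (m : ℕ) {p : ℝ} (hp : 0 < p) :
    ∫ t in (0:ℝ)..1, ∫ u in (0:ℝ)..1, t ^ m * u ^ m * fbmCov p t u
      = 2 * (∫ s in (0:ℝ)..1, s ^ m * fbmCov p 1 s) / (2 * m + p + 2) := by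
  have hcont : Continuous (Function.uncurry fun t u : ℝ => t ^ m * u ^ m * fbmCov p t u) := by
    have := continuous_fbmCov hp.le; fun_prop
  have hsymm : ∀ t u : ℝ, t ^ m * u ^ m * fbmCov p t u = u ^ m * t ^ m * fbmCov p u t := by
    intro t u; rw [fbmCov_comm]; ring
  have htri : ∀ t ∈ uIcc (0:ℝ) 1, ∫ u in (0:ℝ)..t, t ^ m * u ^ m * fbmCov p t u
      = (∫ s in (0:ℝ)..1, s ^ m * fbmCov p 1 s) * (t ^ (2 * m + 1) * t ^ p) := by
    intro t ht
    rw [uIcc_of_le zero_le_one] at ht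
    simp_rw [mul_assoc (t ^ m)]
    rw [intervalIntegral.integral_const_mul, integral_pow_mul_fbmCov m p ht.1]
    ring
  rw [intervalIntegral_square_eq_two_smul_triangle zero_le_one
      (hcont.continuousOn.integrableOn_compact (isCompact_Icc.prod isCompact_Icc) |>.mono_set
        (prod_mono Ioc_subset_Icc_self Ioc_subset_Icc_self)) hsymm,
    integral_congr htri, intervalIntegral.integral_const_mul, integral_pow_mul_rpow _ hp]
  push_cast
  ring

theorem double_integral_covariance_general (H : ℝ) (hH0 : 0 < H)
    (n : ℕ) (hn : 1 ≤ n) :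
    (n : ℝ) ^ (2 * H + 2) / 2 *
        ∫ t in (0:ℝ)..1, ∫ u in (0:ℝ)..1,
          t ^ (n - 1) * u ^ (n - 1) * (t ^ (2 * H) + u ^ (2 * H) - |t - u| ^ (2 * H))
      = (n : ℝ) ^ (2 * H + 1) / ((n : ℝ) + 2 * H)
        - (n : ℝ) ^ (2 * H + 2) * Real.Gamma n * Real.Gamma (2 * H + 1)
            / ((2 * (n : ℝ) + 2 * H) * Real.Gamma ((n : ℝ) + 1 + 2 * H)) := by
  obtain ⟨m, rfl⟩ : ∃ m, n = m + 1 := ⟨n - 1, by omega⟩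
  have hp : 0 < 2 * H := by linarith
  have h := integral_integral_pow_mul_fbmCov m hp
  rw [integral_pow_mul_fbmCov_one m hp] at h
  simp only [fbmCov] at h
  rw [Nat.add_sub_cancel, h]
  push_cast
  have hN : (0:ℝ) < m + 1 := by positivity
  rw [show (m : ℝ) + 1 + 1 + 2 * H = m + 2 * H + 2 by ring,
    show 2 * H + 2 = 2 * H + 1 + 1 by ring, rpow_add_one hN.ne']
  have hGamma : (0:ℝ) < Gamma (m + 2 * H + 2) := Gamma_pos_of_pos (by positivity)
  field_simp
  ring

/-- For `H ∈ (0,1)` and `n ≥ 1`,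
`(n^(2H+2)/2) ∫₀¹∫₀¹ t^(n−1) u^(n−1) (t^(2H) + u^(2H) − |t−u|^(2H)) du dt
  = n^(2H+1)/(n+2H) − n^(2H+2) Γ(n) Γ(2H+1) / ((2n+2H) Γ(n+1+2H))`. -/
theorem double_integral_covariance (H : ℝ) (hH0 : 0 < H) (hH1 : H < 1)
    (n : ℕ) (hn : 1 ≤ n) :
    (n : ℝ) ^ (2 * H + 2) / 2 *
        ∫ t in (0:ℝ)..1, ∫ u in (0:ℝ)..1,
          t ^ (n - 1) * u ^ (n - 1) * (t ^ (2 * H) + u ^ (2 * H) - |t - u| ^ (2 * H))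
      = (n : ℝ) ^ (2 * H + 1) / ((n : ℝ) + 2 * H)
        - (n : ℝ) ^ (2 * H + 2) * Real.Gamma n * Real.Gamma (2 * H + 1)
            / ((2 * (n : ℝ) + 2 * H) * Real.Gamma ((n : ℝ) + 1 + 2 * H)) :=
  double_integral_covariance_general H hH0 n hn
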